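/- Corollary 1 (fit with stepsizes α = μ = T^{−1/3}): Under the MOSP setting with ε > V̄, λ_1 = 0, and stepsizes α = μ = T^{−1/3}, the dynamic fit satisfies Fit_T := ‖[Σ_{t=1}^T g_t(x_t)]^+‖ ≤ M + (2·G·R·T^{1/3} + (R²/2)·T^{2/3} + M²/2)/(ε − V̄); in particular Fit_T is bounded by a constant (depending only on G, R, M, ε, V̄) times T^{2/3}. -/

import Mathlib

open scoped RealInnerProductSpace
open Finset

/-- Entrywise positive projection on `ℝ^m`. -/
noncomputable def posProj {m : ℕ} (v : EuclideanSpace ℝ (Fin m)) :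
    EuclideanSpace ℝ (Fin m) := WithLp.toLp 2 (fun i => max (v i) 0)

/-!
The multipliers form a virtual queue `λ_{s+1} = [λ_s + μ g_s(x_s)]^+`. Since the projection only
increases entries, `μ Σ_{t ≤ T} g_t(x_t) ≤ λ_{T+1}` entrywise, so `Fit_T ≤ ‖λ_{T+1}‖ / μ`.
Testing the optimality of the primal step against the Slater point gives the drift condition
`⟪λ_t, g_t(x_t)⟫ ≤ G R + R² / (2α) - (ε - V̄) ‖λ_t‖`. Expanding `‖λ_t + μ g_t(x_t)‖²` then shows
that the queue cannot grow once `‖λ_t‖` exceeds `(G R + R² / (2α) + μ M² / 2) / (ε - V̄)`, which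
bounds `‖λ_{T+1}‖` uniformly in `T`; the stepsizes `α = μ = T^{-1/3}` turn this into the claim.
-/

section EuclideanSpace

variable {ι : Type*} [Fintype ι]

lemma EuclideanSpace.real_inner_eq_sum (L v : EuclideanSpace ℝ ι) : ⟪L, v⟫ = ∑ i, L i * v i := by
  simp [PiLp.inner_apply, mul_comm]

lemma EuclideanSpace.norm_le_norm_of_abs_le {v w : EuclideanSpace ℝ ι} (h : ∀ i, |v i| ≤ |w i|) :
    ‖v‖ ≤ ‖w‖ := by
  simp only [EuclideanSpace.norm_eq, Real.norm_eq_abs]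
  exact Real.sqrt_le_sqrt (sum_le_sum fun i _ => pow_le_pow_left₀ (abs_nonneg _) (h i) 2)

lemma EuclideanSpace.norm_le_sum_of_nonneg {v : EuclideanSpace ℝ ι} (hv : ∀ i, 0 ≤ v i) :
    ‖v‖ ≤ ∑ i, v i := by
  rw [EuclideanSpace.norm_eq, Real.sqrt_le_left (sum_nonneg fun i _ => hv i)]
  simpa only [Real.norm_eq_abs, sq_abs] using sum_sq_le_sq_sum_of_nonneg fun i _ => hv i

lemma EuclideanSpace.inner_le_inner_of_nonneg {L v w : EuclideanSpace ℝ ι} (hL : ∀ i, 0 ≤ L i)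
    (h : ∀ i, v i ≤ w i) : ⟪L, v⟫ ≤ ⟪L, w⟫ := by
  simp only [EuclideanSpace.real_inner_eq_sum]
  gcongr with i
  exacts [hL i, h i]

lemma EuclideanSpace.inner_le_neg_mul_norm {L u : EuclideanSpace ℝ ι} {ε : ℝ}
    (hL : ∀ i, 0 ≤ L i) (hε : 0 ≤ ε) (hu : ∀ i, u i ≤ -ε) : ⟪L, u⟫ ≤ -(ε * ‖L‖) := calc
  ⟪L, u⟫ ≤ ∑ i, L i * -ε := by
    rw [EuclideanSpace.real_inner_eq_sum]
    gcongr with i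
    exacts [hL i, hu i]
  _ = -(ε * ∑ i, L i) := by rw [← sum_mul]; ring
  _ ≤ -(ε * ‖L‖) := by gcongr; exact EuclideanSpace.norm_le_sum_of_nonneg hL

end EuclideanSpace

section PositiveProjection

variable {m : ℕ}

@[simp]
lemma posProj_apply (v : EuclideanSpace ℝ (Fin m)) (i : Fin m) : posProj v i = max (v i) 0 := rfl

lemma posProj_nonneg (v : EuclideanSpace ℝ (Fin m)) (i : Fin m) : 0 ≤ posProj v i :=
  le_max_right _ _

lemma le_posProj (v : EuclideanSpace ℝ (Fin m)) (i : Fin m) : v i ≤ posProj v i :=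
  le_max_left _ _

lemma posProj_smul {c : ℝ} (hc : 0 ≤ c) (v : EuclideanSpace ℝ (Fin m)) :
    posProj (c • v) = c • posProj v := by
  ext i
  simp [mul_comm c, max_mul_of_nonneg _ _ hc]

lemma norm_posProj_le (v : EuclideanSpace ℝ (Fin m)) : ‖posProj v‖ ≤ ‖v‖ :=
  EuclideanSpace.norm_le_norm_of_abs_le fun i => by
    rw [abs_of_nonneg (posProj_nonneg v i), posProj_apply]
    exact max_le (le_abs_self _) (abs_nonneg _)

lemma norm_posProj_le_of_le {v w : EuclideanSpace ℝ (Fin m)} (hw : ∀ i, 0 ≤ w i)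
    (h : ∀ i, v i ≤ w i) : ‖posProj v‖ ≤ ‖w‖ :=
  EuclideanSpace.norm_le_norm_of_abs_le fun i => by
    rw [abs_of_nonneg (posProj_nonneg v i), abs_of_nonneg (hw i), posProj_apply]
    exact max_le (h i) (hw i)

lemma inner_le_norm_mul_norm_posProj {L : EuclideanSpace ℝ (Fin m)} (hL : ∀ i, 0 ≤ L i)
    (d : EuclideanSpace ℝ (Fin m)) : ⟪L, d⟫ ≤ ‖L‖ * ‖posProj d‖ :=
  (EuclideanSpace.inner_le_inner_of_nonneg hL (le_posProj d)).trans (real_inner_le_norm _ _)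

lemma inner_add_le_of_slater {L u a d : EuclideanSpace ℝ (Fin m)} {ε V K : ℝ}
    (hL : ∀ i, 0 ≤ L i) (hε : 0 ≤ ε) (hu : ∀ i, u i ≤ -ε) (hd : ‖posProj d‖ ≤ V)
    (ha : ⟪L, a⟫ ≤ K + ⟪L, u⟫) : ⟪L, a + d⟫ ≤ K - (ε - V) * ‖L‖ := by
  have hslater := EuclideanSpace.inner_le_neg_mul_norm hL hε hu
  have hvar := (inner_le_norm_mul_norm_posProj hL d).trans
    (mul_le_mul_of_nonneg_left hd (norm_nonneg L))
  rw [inner_add_right]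
  linarith

end PositiveProjection

section InnerProductSpace

variable {E F : Type*} [NormedAddCommGroup E] [InnerProductSpace ℝ E]
  [NormedAddCommGroup F] [InnerProductSpace ℝ F]

lemma inner_le_of_prox_optimal {D x₀ x₁ z : E} {L a b : F} {α G R : ℝ} (hα : 0 ≤ α)
    (hD : ‖D‖ ≤ G) (hz₀ : ‖z - x₀‖ ≤ R) (hz₁ : ‖z - x₁‖ ≤ R)
    (hopt : ⟪D, x₁ - x₀⟫ + ⟪L, a⟫ + ‖x₁ - x₀‖ ^ 2 / (2 * α) ≤
      ⟪D, z - x₀⟫ + ⟪L, b⟫ + ‖z - x₀‖ ^ 2 / (2 * α)) :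
    ⟪L, a⟫ ≤ G * R + R ^ 2 / (2 * α) + ⟪L, b⟫ := by
  have hlin : ⟪D, z - x₀⟫ - ⟪D, x₁ - x₀⟫ ≤ G * R := by
    rw [← inner_sub_right, sub_sub_sub_cancel_right]
    exact (real_inner_le_norm _ _).trans
      (mul_le_mul hD hz₁ (norm_nonneg _) ((norm_nonneg _).trans hD))
  have hquad : ‖z - x₀‖ ^ 2 / (2 * α) ≤ R ^ 2 / (2 * α) := by gcongr
  have hprox : 0 ≤ ‖x₁ - x₀‖ ^ 2 / (2 * α) := by positivity
  linarith

/-- The bound is the threshold `(K + μ M² / 2) / c` beyond which the drift outweighs the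
quadratic term `μ² ‖q‖² ≤ μ² M²`, plus the largest single increment `μ M`. -/
lemma norm_add_smul_le_of_drift {L q : E} {μ c K M : ℝ} (hμ : 0 ≤ μ) (hc : 0 < c)
    (hq : ‖q‖ ≤ M) (hdrift : ⟪L, q⟫ ≤ K - c * ‖L‖)
    (hL : ‖L‖ ≤ μ * M + (K + μ * M ^ 2 / 2) / c) :
    ‖L + μ • q‖ ≤ μ * M + (K + μ * M ^ 2 / 2) / c := by
  rcases le_or_gt ‖L‖ ((K + μ * M ^ 2 / 2) / c) with hsmall | hlarge
  · calc ‖L + μ • q‖ ≤ ‖L‖ + μ * ‖q‖ := by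
          simpa only [norm_smul, Real.norm_of_nonneg hμ] using norm_add_le L (μ • q)
      _ ≤ μ * M + (K + μ * M ^ 2 / 2) / c := by nlinarith
  · refine le_trans ?_ hL
    rw [div_lt_iff₀ hc] at hlarge
    have hdecrease : ‖L + μ • q‖ ^ 2 ≤ ‖L‖ ^ 2 := by
      rw [norm_add_sq_real, real_inner_smul_right, norm_smul, Real.norm_of_nonneg hμ, mul_pow]
      have hq2 : ‖q‖ ^ 2 ≤ M ^ 2 := pow_le_pow_left₀ (norm_nonneg q) hq 2
      nlinarith [mul_le_mul_of_nonneg_left hdrift hμ, mul_le_mul_of_nonneg_left hq2 (sq_nonneg μ),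
        mul_le_mul_of_nonneg_left hlarge.le hμ]
    exact (pow_le_pow_iff_left₀ (norm_nonneg _) (norm_nonneg _) two_ne_zero).mp hdecrease

end InnerProductSpace

section VirtualQueue

variable {m : ℕ} {μ : ℝ} {q lam : ℕ → EuclideanSpace ℝ (Fin m)}

lemma queue_nonneg (h0 : lam 0 = 0) (hstep : ∀ s, lam (s + 1) = posProj (lam s + μ • q s))
    (s : ℕ) (i : Fin m) : 0 ≤ lam s i := by
  cases s with
  | zero => simp [h0]
  | succ s => rw [hstep]; exact posProj_nonneg _ i

lemma smul_sum_le_queue (h0 : lam 0 = 0) (hstep : ∀ s, lam (s + 1) = posProj (lam s + μ • q s))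
    (s : ℕ) (i : Fin m) : (μ • ∑ t ∈ range s, q t) i ≤ lam s i := by
  induction s with
  | zero => simp [h0]
  | succ s ih =>
    rw [hstep, sum_range_succ, smul_add]
    exact (add_le_add ih le_rfl).trans (le_posProj (lam s + μ • q s) i)

lemma norm_queue_le {c K M : ℝ} (hμ : 0 ≤ μ) (hc : 0 < c) (h0 : lam 0 = 0)
    (hstep : ∀ s, lam (s + 1) = posProj (lam s + μ • q s)) (hq : ∀ s, ‖q s‖ ≤ M)
    (hdrift : ∀ s, ⟪lam s, q s⟫ ≤ K - c * ‖lam s‖) (s : ℕ) :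
    ‖lam s‖ ≤ μ * M + (K + μ * M ^ 2 / 2) / c := by
  induction s with
  | zero =>
    have hK : 0 ≤ K := by simpa [h0] using hdrift 0
    have hM : 0 ≤ M := (norm_nonneg _).trans (hq 0)
    rw [h0, norm_zero]
    positivity
  | succ s ih =>
    rw [hstep]
    exact (norm_posProj_le _).trans (norm_add_smul_le_of_drift hμ hc (hq s) (hdrift s) ih)

lemma norm_posProj_sum_le_of_drift {c K M : ℝ} (hμ : 0 < μ) (hc : 0 < c) (h0 : lam 0 = 0)
    (hstep : ∀ s, lam (s + 1) = posProj (lam s + μ • q s)) (hq : ∀ s, ‖q s‖ ≤ M)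
    (hdrift : ∀ s, ⟪lam s, q s⟫ ≤ K - c * ‖lam s‖) (s : ℕ) :
    ‖posProj (∑ t ∈ range s, q t)‖ ≤ M + (K / μ + M ^ 2 / 2) / c := by
  have h := (norm_posProj_le_of_le (queue_nonneg h0 hstep s) (smul_sum_le_queue h0 hstep s)).trans
    (norm_queue_le hμ.le hc h0 hstep hq hdrift s)
  rw [posProj_smul hμ.le, norm_smul, Real.norm_of_nonneg hμ.le] at h
  calc ‖posProj (∑ t ∈ range s, q t)‖ ≤ (μ * M + (K + μ * M ^ 2 / 2) / c) / μ :=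
        (le_div_iff₀' hμ).2 h
    _ = M + (K / μ + M ^ 2 / 2) / c := by field_simp

end VirtualQueue

lemma prox_constant_div_stepsize_le {T : ℕ} (hT : 1 ≤ T) {G R : ℝ} (hGR : 0 ≤ G * R) :
    (G * R + R ^ 2 / (2 * (T : ℝ) ^ (-(1 / 3 : ℝ)))) / (T : ℝ) ^ (-(1 / 3 : ℝ)) ≤
      2 * G * R * (T : ℝ) ^ ((1 : ℝ) / 3) + R ^ 2 / 2 * (T : ℝ) ^ ((2 : ℝ) / 3) := by
  have hT0 : (0 : ℝ) < T := by exact_mod_cast hT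
  have hp : 0 < (T : ℝ) ^ ((1 : ℝ) / 3) := Real.rpow_pos_of_pos hT0 _
  rw [Real.rpow_neg hT0.le, show (2 : ℝ) / 3 = 1 / 3 + 1 / 3 by norm_num, Real.rpow_add hT0]
  field_simp
  nlinarith [mul_nonneg hGR hp.le]

theorem mosp_fit_bound_stepsize_general {n m : ℕ}
    (T : ℕ) (hT : 1 ≤ T)
    (X : Set (EuclideanSpace ℝ (Fin n)))
    (R G M ε Vbar α μ : ℝ)
    (hR : ∀ x ∈ X, ∀ y ∈ X, ‖x - y‖ ≤ R)
    (f : ℕ → EuclideanSpace ℝ (Fin n) → ℝ)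
    (hG : ∀ t, ∀ x ∈ X, ‖gradient (f t) x‖ ≤ G)
    (g : ℕ → EuclideanSpace ℝ (Fin n) → EuclideanSpace ℝ (Fin m))
    (hM : ∀ t, ∀ x ∈ X, ‖g t x‖ ≤ M)
    (hε : 0 < ε)
    (hSlater : ∃ xt ∈ X, ∀ t, ∀ i, g t xt i ≤ -ε)
    (hvar : ∀ t, ∀ x ∈ X, ‖posProj (g (t + 1) x - g t x)‖ ≤ Vbar)
    (hεV : Vbar < ε)
    (hα : 0 < α) (hμ : 0 < μ)
    (hαT : α = (T : ℝ) ^ (-(1 / 3 : ℝ))) (hμT : μ = (T : ℝ) ^ (-(1 / 3 : ℝ)))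
    (x : ℕ → EuclideanSpace ℝ (Fin n))
    (lam : ℕ → EuclideanSpace ℝ (Fin m))
    (hx0 : x 0 ∈ X) (hlam1 : lam 1 = 0)
    (hprimal : ∀ t, 1 ≤ t → x t ∈ X ∧ ∀ z ∈ X,
      ⟪gradient (f (t - 1)) (x (t - 1)), x t - x (t - 1)⟫ + ⟪lam t, g (t - 1) (x t)⟫ +
          ‖x t - x (t - 1)‖ ^ 2 / (2 * α) ≤
        ⟪gradient (f (t - 1)) (x (t - 1)), z - x (t - 1)⟫ + ⟪lam t, g (t - 1) z⟫ +
          ‖z - x (t - 1)‖ ^ 2 / (2 * α))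
    (hdual : ∀ t, 1 ≤ t → lam (t + 1) = posProj (lam t + μ • g t (x t))) :
    ‖posProj (∑ t ∈ Icc 1 T, g t (x t))‖ ≤
      M + (2 * G * R * (T : ℝ) ^ ((1 : ℝ) / 3) + R ^ 2 / 2 * (T : ℝ) ^ ((2 : ℝ) / 3) +
        M ^ 2 / 2) / (ε - Vbar) := by
  obtain ⟨xs, hxsX, hxs⟩ := hSlater
  have hxX : ∀ t, x t ∈ X
    | 0 => hx0
    | s + 1 => (hprimal (s + 1) s.succ_pos).1
  have hstep : ∀ s, lam (s + 1 + 1) = posProj (lam (s + 1) + μ • g (s + 1) (x (s + 1))) :=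
    fun s => hdual (s + 1) s.succ_pos
  have hnonneg : ∀ s i, 0 ≤ lam (s + 1) i := queue_nonneg (lam := fun s => lam (s + 1)) hlam1 hstep
  have hdrift : ∀ s, ⟪lam (s + 1), g (s + 1) (x (s + 1))⟫ ≤
      G * R + R ^ 2 / (2 * α) - (ε - Vbar) * ‖lam (s + 1)‖ := fun s => by
    have hopt := (hprimal (s + 1) s.succ_pos).2 xs hxsX
    simp only [Nat.add_sub_cancel] at hopt
    rw [← add_sub_cancel (g s (x (s + 1))) (g (s + 1) (x (s + 1)))]
    exact inner_add_le_of_slater (hnonneg s) hε.le (hxs s) (hvar s _ (hxX _))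
      (inner_le_of_prox_optimal hα.le (hG s _ (hxX s)) (hR _ hxsX _ (hxX s))
        (hR _ hxsX _ (hxX (s + 1))) hopt)
  have hfit := norm_posProj_sum_le_of_drift (lam := fun s => lam (s + 1))
    (q := fun s => g (s + 1) (x (s + 1))) hμ (sub_pos.2 hεV) hlam1 hstep (fun s => hM _ _ (hxX _))
    hdrift T
  have hGR : 0 ≤ G * R :=
    mul_nonneg ((norm_nonneg _).trans (hG 0 _ hx0)) ((norm_nonneg _).trans (hR _ hx0 _ hx0))
  have hc : 0 ≤ ε - Vbar := (sub_pos.2 hεV).le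
  rw [← Ico_add_one_right_eq_Icc, sum_Ico_eq_sum_range, add_tsub_cancel_right]
  simp only [add_comm 1] at hfit ⊢
  refine hfit.trans ?_
  gcongr M + (?_ + _) / _
  rw [hαT, hμT]
  exact prox_constant_div_stepsize_le hT hGR

/-- Corollary 1 (dynamic-fit bound with stepsizes `α = μ = T^{-1/3}`). -/
theorem mosp_fit_bound_stepsize {n m : ℕ} (hm : 0 < m)
    (T : ℕ) (hT : 1 ≤ T)
    (X : Set (EuclideanSpace ℝ (Fin n))) (hXne : X.Nonempty) (hXconv : Convex ℝ X)
    (R G M ε Vbar α μ : ℝ)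
    (hR : ∀ x ∈ X, ∀ y ∈ X, ‖x - y‖ ≤ R)
    (f : ℕ → EuclideanSpace ℝ (Fin n) → ℝ)
    (hfconv : ∀ t, ConvexOn ℝ Set.univ (f t))
    (hfdiff : ∀ t, Differentiable ℝ (f t))
    (hG : ∀ t, ∀ x ∈ X, ‖gradient (f t) x‖ ≤ G)
    (g : ℕ → EuclideanSpace ℝ (Fin n) → EuclideanSpace ℝ (Fin m))
    (hgconv : ∀ t i, ConvexOn ℝ Set.univ fun x => g t x i)
    (hM : ∀ t, ∀ x ∈ X, ‖g t x‖ ≤ M)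
    (hε : 0 < ε)
    (hSlater : ∃ xt ∈ X, ∀ t, ∀ i, g t xt i ≤ -ε)
    (hVbar : 0 ≤ Vbar)
    (hvar : ∀ t, ∀ x ∈ X, ‖posProj (g (t + 1) x - g t x)‖ ≤ Vbar)
    (hεV : Vbar < ε)
    (hα : 0 < α) (hμ : 0 < μ)
    (hαT : α = (T : ℝ) ^ (-(1 / 3 : ℝ))) (hμT : μ = (T : ℝ) ^ (-(1 / 3 : ℝ)))
    (x : ℕ → EuclideanSpace ℝ (Fin n))
    (lam : ℕ → EuclideanSpace ℝ (Fin m))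
    (hx0 : x 0 ∈ X) (hlam1 : lam 1 = 0)
    (hprimal : ∀ t, 1 ≤ t → x t ∈ X ∧ ∀ z ∈ X,
      ⟪gradient (f (t - 1)) (x (t - 1)), x t - x (t - 1)⟫ + ⟪lam t, g (t - 1) (x t)⟫ +
          ‖x t - x (t - 1)‖ ^ 2 / (2 * α) ≤
        ⟪gradient (f (t - 1)) (x (t - 1)), z - x (t - 1)⟫ + ⟪lam t, g (t - 1) z⟫ +
          ‖z - x (t - 1)‖ ^ 2 / (2 * α))
    (hdual : ∀ t, 1 ≤ t → lam (t + 1) = posProj (lam t + μ • g t (x t))) :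
    ‖posProj (∑ t ∈ Icc 1 T, g t (x t))‖ ≤
      M + (2 * G * R * (T : ℝ) ^ ((1 : ℝ) / 3) + R ^ 2 / 2 * (T : ℝ) ^ ((2 : ℝ) / 3) +
        M ^ 2 / 2) / (ε - Vbar) :=
  mosp_fit_bound_stepsize_general T hT X R G M ε Vbar α μ hR f hG g hM hε hSlater hvar hεV hα hμ hαT
    hμT x lam hx0 hlam1 hprimal hdual
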